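/- Let ε₀, α, β, μ₀ > 0 and f(ω) := cos(σ₀(ω))cos(ρ(ω)σ₀(ω)) − ((1+ρ(ω)²)/(2ρ(ω)))sin(σ₀(ω))sin(ρ(ω)σ₀(ω)) with σ₀(ω) = ω√(ε₀μ₀), ρ(ω) = √(1 + α/(ε₀(1−βω²))), and ω* = 1/√β. Assume sin(σ₀(ω*)) ≠ 0. Then for every δ > 0, the interval [ω* − δ, ω*) contains infinitely many pairwise disjoint nonempty open subintervals on each of which |f| > 1. -/

import Mathlib

open Filter Topology Set

/-- The undamped contrast `ρ(ω) = √(1 + α/(ε₀(1 − βω²)))` (positive real square root). -/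
noncomputable def undampedContrast (α β ε₀ : ℝ) (ω : ℝ) : ℝ :=
  Real.sqrt (1 + α / (ε₀ * (1 - β * ω ^ 2)))

/-- The right-hand side `f(ω)` of the one-dimensional dispersion relation
for the undamped singular permittivity. -/
noncomputable def undampedF (α β ε₀ μ₀ : ℝ) (ω : ℝ) : ℝ :=
  let σ₀ := ω * Real.sqrt (ε₀ * μ₀)
  let ρ := undampedContrast α β ε₀ ω
  Real.cos σ₀ * Real.cos (ρ * σ₀) -
    ((1 + ρ ^ 2) / (2 * ρ)) * (Real.sin σ₀ * Real.sin (ρ * σ₀))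

theorem infinitely_many_band_gaps_near_pole
    (ε₀ α β μ₀ : ℝ) (hε₀ : 0 < ε₀) (hα : 0 < α) (hβ : 0 < β) (hμ₀ : 0 < μ₀)
    (hsin : Real.sin ((1 / Real.sqrt β) * Real.sqrt (ε₀ * μ₀)) ≠ 0) :
    ∀ δ > (0 : ℝ), ∃ a b : ℕ → ℝ,
      (∀ n, (1 / Real.sqrt β) - δ ≤ a n ∧ a n < b n ∧ b n < 1 / Real.sqrt β) ∧
      (∀ m n, m ≠ n → Disjoint (Ioo (a m) (b m)) (Ioo (a n) (b n))) ∧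
      (∀ n, ∀ ω ∈ Ioo (a n) (b n), 1 < |undampedF α β ε₀ μ₀ ω|) := by
  intro δ hδ
  set S : ℝ := Real.sqrt (ε₀ * μ₀) with hSdef
  have hS : 0 < S := Real.sqrt_pos.mpr (mul_pos hε₀ hμ₀)
  set W : ℝ := 1 / Real.sqrt β with hWdef
  have hsqβ : 0 < Real.sqrt β := Real.sqrt_pos.mpr hβ
  have hW : 0 < W := by rw [hWdef]; positivity
  have hβW2 : β * W ^ 2 = 1 := by
    rw [hWdef, div_pow, one_pow, Real.sq_sqrt hβ.le]
    field_simp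
  set ρ : ℝ → ℝ := undampedContrast α β ε₀ with hρdef
  set g : ℝ → ℝ := fun ω => ρ ω * (ω * S) with hgdef
  -- positivity of 1 - β ω² on (0, W)
  have hden : ∀ ω ∈ Ioo (0:ℝ) W, 0 < 1 - β * ω ^ 2 := by
    intro ω hω
    have h1 : ω ^ 2 < W ^ 2 := by nlinarith [hω.1, hω.2]
    nlinarith
  have hρgt : ∀ ω ∈ Ioo (0:ℝ) W, 1 < ρ ω := by
    intro ω hω
    have h1 : 0 < 1 - β * ω ^ 2 := hden ω hω
    have h2 : 0 < α / (ε₀ * (1 - β * ω ^ 2)) := by positivity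
    have : (1:ℝ) < 1 + α / (ε₀ * (1 - β * ω ^ 2)) := by linarith
    calc (1:ℝ) = Real.sqrt 1 := Real.sqrt_one.symm
    _ < ρ ω := Real.sqrt_lt_sqrt (by norm_num) this
  -- continuity of ρ on (0, W)
  have hcontρ : ContinuousOn ρ (Ioo (0:ℝ) W) := by
    rw [hρdef]
    unfold undampedContrast
    apply Real.continuous_sqrt.comp_continuousOn
    apply continuousOn_const.add
    apply continuousOn_const.div
    · fun_prop
    · intro ω hω
      have := hden ω hω
      positivity
  have hcontf : ContinuousOn (undampedF α β ε₀ μ₀) (Ioo (0:ℝ) W) := by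
    unfold undampedF
    simp only
    apply ContinuousOn.sub
    · exact ((Real.continuous_cos.comp (continuous_id.mul continuous_const)).continuousOn).mul
        (Real.continuous_cos.comp_continuousOn
          (hcontρ.mul ((continuous_id.mul continuous_const).continuousOn)))
    · apply ContinuousOn.mul
      · apply ContinuousOn.div
        · exact continuousOn_const.add (hcontρ.pow 2)
        · exact continuousOn_const.mul hcontρ
        · intro ω hω
          have := hρgt ω hω
          positivity
      · exact ((Real.continuous_sin.comp (continuous_id.mul continuous_const)).continuousOn).mul
          (Real.continuous_sin.comp_continuousOn
            (hcontρ.mul ((continuous_id.mul continuous_const).continuousOn)))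
  have hcontg : ContinuousOn g (Ioo (0:ℝ) W) :=
    hcontρ.mul ((continuous_id.mul continuous_const).continuousOn)
  -- ρ → atTop as ω → W⁻
  have hIoo_mem : Ioo (0:ℝ) W ∈ 𝓝[<] W := Ioo_mem_nhdsLT_of_mem ⟨hW, le_refl W⟩
  have hd0 : Tendsto (fun ω : ℝ => 1 - β * ω ^ 2) (𝓝[<] W) (𝓝[>] 0) := by
    rw [tendsto_nhdsWithin_iff]
    constructor
    · have : Tendsto (fun ω : ℝ => 1 - β * ω ^ 2) (𝓝 W) (𝓝 (1 - β * W ^ 2)) :=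
        (continuous_const.sub (continuous_const.mul (continuous_pow 2))).tendsto W
      rw [show 1 - β * W ^ 2 = 0 by rw [hβW2]; ring] at this
      exact this.mono_left nhdsWithin_le_nhds
    · filter_upwards [hIoo_mem] with ω hω
      exact hden ω hω
  have hρT : Tendsto ρ (𝓝[<] W) atTop := by
    have h1 : Tendsto (fun ω : ℝ => α / (ε₀ * (1 - β * ω ^ 2))) (𝓝[<] W) atTop := by
      have h2 : Tendsto (fun ω : ℝ => (α / ε₀) * (1 - β * ω ^ 2)⁻¹) (𝓝[<] W) atTop :=
        (tendsto_inv_nhdsGT_zero.comp hd0).const_mul_atTop (by positivity)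
      refine h2.congr fun ω => ?_
      rw [eq_comm, ← div_div, div_eq_mul_inv (α / ε₀)]
    have h3 : Tendsto (fun ω : ℝ => 1 + α / (ε₀ * (1 - β * ω ^ 2))) (𝓝[<] W) atTop :=
      tendsto_atTop_add_const_left _ 1 h1
    have hsqrtT : Tendsto Real.sqrt atTop atTop := by
      apply tendsto_atTop_atTop.mpr
      intro b
      exact ⟨b ^ 2, fun a ha => Real.le_sqrt_of_sq_le ha⟩
    exact hsqrtT.comp h3
  -- g → atTop as ω → W⁻
  have hgT : Tendsto g (𝓝[<] W) atTop := by
    apply hρT.atTop_mul_pos (mul_pos hW hS)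
    exact ((continuous_id.mul continuous_const).tendsto W).mono_left nhdsWithin_le_nhds
  -- |sin σ₀| stays away from 0 and amplitude blows up
  set m : ℝ := |Real.sin (W * S)| with hmdef
  have hm : 0 < m := abs_pos.mpr hsin
  have hsinT : Tendsto (fun ω : ℝ => |Real.sin (ω * S)|) (𝓝[<] W) (𝓝 m) := by
    exact ((Real.continuous_sin.comp
      (continuous_id.mul continuous_const)).abs.tendsto W).mono_left nhdsWithin_le_nhds
  have hE : ∀ᶠ ω in 𝓝[<] W,
      2 < ((1 + ρ ω ^ 2) / (2 * ρ ω)) * |Real.sin (ω * S)| := by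
    have h1 : ∀ᶠ ω in 𝓝[<] W, 8 / m < ρ ω := hρT.eventually_gt_atTop _
    have h2 : ∀ᶠ ω in 𝓝[<] W, m / 2 < |Real.sin (ω * S)| :=
      hsinT.eventually (eventually_gt_nhds (by linarith))
    filter_upwards [h1, h2, hIoo_mem] with ω hρω hsinω hω
    have hρ1 : 1 < ρ ω := hρgt ω hω
    have hA : ρ ω / 2 ≤ (1 + ρ ω ^ 2) / (2 * ρ ω) := by
      rw [div_le_div_iff₀ (by norm_num) (by positivity)]
      nlinarith
    have h4 : 4 / m < (1 + ρ ω ^ 2) / (2 * ρ ω) := by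
      have : 4 / m < ρ ω / 2 := by
        rw [div_lt_div_iff₀ hm (by norm_num)]
        rw [div_lt_iff₀ hm] at hρω
        nlinarith
      linarith
    have h5 : (4 / m) * (m / 2) < ((1 + ρ ω ^ 2) / (2 * ρ ω)) * |Real.sin (ω * S)| := by
      apply mul_lt_mul'' h4 hsinω (by positivity) (by positivity)
    have h6 : (4 / m) * (m / 2) = 2 := by field_simp; ring
    linarith [h5, h6.symm.le]
  obtain ⟨c, hc, hcsub⟩ := mem_nhdsLT_iff_exists_Ioo_subset.mp hE
  -- the left endpoint of the region where we work
  set L : ℝ := max c (max 0 (W - δ)) with hLdef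
  have hLW : L < W := by
    apply max_lt hc
    apply max_lt hW
    linarith
  have hL0 : 0 ≤ L := le_trans (le_max_left 0 (W - δ)) (le_max_right c _)
  have hLc : c ≤ L := le_max_left _ _
  have hLδ : W - δ ≤ L := le_trans (le_max_right 0 (W - δ)) (le_max_right c _)
  -- key step: past any point t in [L, W) there is an interval where |f| > 1
  have key : ∀ t, L ≤ t → t < W → ∃ p : ℝ × ℝ, t < p.1 ∧ p.1 < p.2 ∧ p.2 < W ∧
      ∀ ω ∈ Ioo p.1 p.2, 1 < |undampedF α β ε₀ μ₀ ω| := by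
    intro t hLt htW
    set s : ℝ := (t + W) / 2 with hsdef
    have hts : t < s := by rw [hsdef]; linarith
    have hsW : s < W := by rw [hsdef]; linarith
    have hs0 : 0 < s := lt_of_le_of_lt (le_trans hL0 hLt) hts
    have hπ : 0 < Real.pi := Real.pi_pos
    -- find u past s with g u large
    have h1 : ∀ᶠ ω in 𝓝[<] W, g s + 3 * Real.pi + 1 < g ω := hgT.eventually_gt_atTop _
    have h2 : Ioo s W ∈ 𝓝[<] W := Ioo_mem_nhdsLT_of_mem ⟨hsW, le_refl W⟩
    obtain ⟨u, hgu, hsu⟩ := (h1.and h2).exists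
    -- pick a level y = π/2 + 2πk in (g s, g u) where sin = 1
    set k : ℤ := ⌈g s / (2 * Real.pi)⌉ with hkdef
    set y : ℝ := Real.pi / 2 + (k : ℝ) * (2 * Real.pi) with hydef
    have hk1 : g s / (2 * Real.pi) ≤ (k : ℝ) := Int.le_ceil _
    have hk2 : (k : ℝ) < g s / (2 * Real.pi) + 1 := Int.ceil_lt_add_one _
    have hy1 : g s < y := by
      have : g s ≤ (k : ℝ) * (2 * Real.pi) := by
        rw [div_le_iff₀ (by positivity)] at hk1
        linarith
      rw [hydef]; linarith
    have hy2 : y < g u := by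
      have : (k : ℝ) * (2 * Real.pi) < g s + 2 * Real.pi := by
        rw [← lt_div_iff₀ (by positivity : (0:ℝ) < 2 * Real.pi)]
        calc (k : ℝ) < g s / (2 * Real.pi) + 1 := hk2
        _ = (g s + 2 * Real.pi) / (2 * Real.pi) := by field_simp
      rw [hydef]; linarith
    have hsiny : Real.sin y = 1 := by
      rw [hydef, Real.sin_add_int_mul_two_pi, Real.sin_pi_div_two]
    -- IVT to find ω₀ with g ω₀ = y
    have hIcc : Icc s u ⊆ Ioo (0:ℝ) W := fun x hx =>
      ⟨lt_of_lt_of_le hs0 hx.1, lt_of_le_of_lt hx.2 hsu.2⟩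
    obtain ⟨ω₀, hω₀mem, hgω₀⟩ :=
      intermediate_value_Icc hsu.1.le (hcontg.mono hIcc) ⟨hy1.le, hy2.le⟩
    have hω₀Ioo : ω₀ ∈ Ioo (0:ℝ) W := hIcc hω₀mem
    have hω₀c : ω₀ ∈ Ioo c W := ⟨lt_of_le_of_lt (le_trans hLc hLt)
      (lt_of_lt_of_le hts hω₀mem.1), hω₀Ioo.2⟩
    have hAω₀ : 2 < ((1 + ρ ω₀ ^ 2) / (2 * ρ ω₀)) * |Real.sin (ω₀ * S)| := hcsub hω₀c
    -- |f ω₀| > 1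
    have hfval : undampedF α β ε₀ μ₀ ω₀ =
        Real.cos (ω₀ * S) * Real.cos y -
          ((1 + ρ ω₀ ^ 2) / (2 * ρ ω₀)) * Real.sin (ω₀ * S) := by
      unfold undampedF
      simp only
      rw [← hSdef, ← hρdef]
      have : ρ ω₀ * (ω₀ * S) = y := hgω₀
      rw [this, hsiny, mul_one]
    have h1lt : 1 < |undampedF α β ε₀ μ₀ ω₀| := by
      rw [hfval]
      set A : ℝ := (1 + ρ ω₀ ^ 2) / (2 * ρ ω₀) with hAdef
      have hApos : 0 < A := by
        have := hρgt ω₀ hω₀Ioo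
        rw [hAdef]; positivity
      have habs1 : |Real.cos (ω₀ * S) * Real.cos y| ≤ 1 := by
        rw [abs_mul]
        exact mul_le_one₀ (Real.abs_cos_le_one _) (abs_nonneg _) (Real.abs_cos_le_one _)
      have habs2 : |A * Real.sin (ω₀ * S)| = A * |Real.sin (ω₀ * S)| := by
        rw [abs_mul, abs_of_pos hApos]
      have := abs_sub_abs_le_abs_sub (A * Real.sin (ω₀ * S))
        (Real.cos (ω₀ * S) * Real.cos y)
      have heq : |A * Real.sin (ω₀ * S) - Real.cos (ω₀ * S) * Real.cos y| =
          |Real.cos (ω₀ * S) * Real.cos y - A * Real.sin (ω₀ * S)| := abs_sub_comm _ _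
      rw [heq, habs2] at this
      linarith
    -- spread to an open interval by continuity
    have hcontf₀ : ContinuousAt (undampedF α β ε₀ μ₀) ω₀ :=
      hcontf.continuousAt (Ioo_mem_nhds hω₀Ioo.1 hω₀Ioo.2)
    have hU : {ω : ℝ | 1 < |undampedF α β ε₀ μ₀ ω|} ∈ 𝓝 ω₀ := by
      have habs : ContinuousAt (fun ω => |undampedF α β ε₀ μ₀ ω|) ω₀ :=
        hcontf₀.abs
      exact habs.eventually (eventually_gt_nhds h1lt)
    obtain ⟨l, r, hmemlr, hsub⟩ := mem_nhds_iff_exists_Ioo_subset.mp hU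
    refine ⟨(max l ((t + ω₀) / 2), min r ((ω₀ + W) / 2)), ?_, ?_, ?_, ?_⟩
    · simp only
      have : t < (t + ω₀) / 2 := by
        have : t < ω₀ := lt_of_lt_of_le hts hω₀mem.1
        linarith
      exact lt_max_of_lt_right this
    · simp only
      apply max_lt_iff.mpr ⟨lt_min_iff.mpr ⟨?_, ?_⟩, lt_min_iff.mpr ⟨?_, ?_⟩⟩
      · exact lt_trans hmemlr.1 hmemlr.2
      · have hω₀W : ω₀ < W := hω₀Ioo.2
        calc l < ω₀ := hmemlr.1
        _ < (ω₀ + W) / 2 := by linarith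
      · have : t < ω₀ := lt_of_lt_of_le hts hω₀mem.1
        calc (t + ω₀) / 2 < ω₀ := by linarith
        _ < r := hmemlr.2
      · have : t < ω₀ := lt_of_lt_of_le hts hω₀mem.1
        have hω₀W : ω₀ < W := hω₀Ioo.2
        calc (t + ω₀) / 2 < ω₀ := by linarith
        _ < (ω₀ + W) / 2 := by linarith
    · simp only
      have hω₀W : ω₀ < W := hω₀Ioo.2
      apply min_lt_of_right_lt
      linarith
    · intro ω hω
      apply hsub
      simp only [mem_Ioo] at hω ⊢
      exact ⟨lt_of_le_of_lt (le_max_left _ _) hω.1, lt_of_lt_of_le hω.2 (min_le_left _ _)⟩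
  -- recursive construction
  choose! p hp1 hp2 hp3 hp4 using key
  set T : ℕ → ℝ := fun n => Nat.rec L (fun _ prev => (p prev).2) n with hTdef
  have hT0 : T 0 = L := rfl
  have hTsucc : ∀ n, T (n + 1) = (p (T n)).2 := fun n => rfl
  have hTinv : ∀ n, L ≤ T n ∧ T n < W := by
    intro n
    induction n with
    | zero => exact ⟨le_refl L, hLW⟩
    | succ n ih =>
      obtain ⟨ih1, ih2⟩ := ih
      have h1 := hp1 (T n) ih1 ih2
      have h2 := hp2 (T n) ih1 ih2
      have h3 := hp3 (T n) ih1 ih2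
      rw [hTsucc]
      exact ⟨le_of_lt (lt_of_le_of_lt ih1 (lt_trans h1 h2)), h3⟩
  have hstep : ∀ n, T n < (p (T n)).1 ∧ (p (T n)).1 < (p (T n)).2 ∧ (p (T n)).2 < W ∧
      ∀ ω ∈ Ioo (p (T n)).1 (p (T n)).2, 1 < |undampedF α β ε₀ μ₀ ω| := by
    intro n
    exact ⟨hp1 _ (hTinv n).1 (hTinv n).2, hp2 _ (hTinv n).1 (hTinv n).2,
      hp3 _ (hTinv n).1 (hTinv n).2, hp4 _ (hTinv n).1 (hTinv n).2⟩
  have hTmono : StrictMono T := by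
    apply strictMono_nat_of_lt_succ
    intro n
    rw [hTsucc]
    exact lt_trans (hstep n).1 (hstep n).2.1
  refine ⟨fun n => (p (T n)).1, fun n => (p (T n)).2, ?_, ?_, ?_⟩
  · intro n
    refine ⟨?_, (hstep n).2.1, (hstep n).2.2.1⟩
    calc W - δ ≤ L := hLδ
    _ ≤ T n := (hTinv n).1
    _ ≤ (p (T n)).1 := (hstep n).1.le
  · intro i j hij
    have hkey : ∀ i j : ℕ, i < j →
        Disjoint (Ioo (p (T i)).1 (p (T i)).2) (Ioo (p (T j)).1 (p (T j)).2) := by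
      intro i j hij
      have hle : (p (T i)).2 ≤ (p (T j)).1 := by
        have h1 : (p (T i)).2 = T (i + 1) := (hTsucc i).symm
        have h2 : T (i + 1) ≤ T j := hTmono.monotone hij
        have h3 : T j < (p (T j)).1 := (hstep j).1
        rw [h1]; exact le_of_lt (lt_of_le_of_lt h2 h3)
      rw [Set.disjoint_left]
      intro x hx hx'
      exact absurd (lt_of_lt_of_le hx.2 hle) (not_lt.mpr hx'.1.le)
    rcases lt_or_gt_of_ne hij with h | h
    · exact hkey i j h
    · exact (hkey j i h).symm
  · intro n ω hω
    exact (hstep n).2.2.2 ω hω
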